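/- Suppose for each i = 1, 2, ... we have h-sets N_{i-1}, N_i in ℝ² and continuous maps f_i with N_{i-1} f_i-covers N_i, and suppose that the following finite shadowing property holds: for every k and every horizontal disk h in N_0 there exists x_k ∈ |h| whose trajectory under f_1, ..., f_k visits the interiors of N_1, ..., N_k. If each |h| is compact and each map f_i is continuous, then for every horizontal disk h in N_0 there exists a point z_0 ∈ |h| and a forward trajectory z_0, z_1, z_2, ... with f_i(z_{i-1}) = z_i and z_i ∈ int N_i for all i ≥ 1. -/

import Mathlib

/-!
For each `i`, the points whose `i`-th iterate lies in the closed h-set `N_i` form a closed set;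
by finite shadowing, any finitely many of them have a common point in `|h|`, so by compactness some
`z₀ ∈ |h|` has its whole trajectory in the closed h-sets. The covering relations then push
it into the interiors: since `N_{i-1} ⟹ N_i` maps no point of `N_{i-1}` into the top or bottom
edge of `N_i`, the second coordinate of `c_i z_i` is not `±1`; since `N_i ⟹ N_{i+1}` maps the
left and right edges of `N_i` outside `N_{i+1}`, while `z_{i+1} ∈ N_{i+1}`, neither is the first.
-/

/-- The closed unit square `[-1,1]²`. -/
def unitSquare : Set (ℝ × ℝ) := Set.Icc (-1 : ℝ) 1 ×ˢ Set.Icc (-1 : ℝ) 1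

/-- The open unit square `(-1,1)²`. -/
def openSquare : Set (ℝ × ℝ) := Set.Ioo (-1 : ℝ) 1 ×ˢ Set.Ioo (-1 : ℝ) 1

/-- Covering relation `M ⟹f N` expressed through the homeomorphisms `cM, cN`. -/
def Covers (cM cN : ℝ × ℝ ≃ₜ ℝ × ℝ) (f : ℝ × ℝ → ℝ × ℝ) : Prop :=
  (((∀ y ∈ Set.Icc (-1 : ℝ) 1, (cN (f (cM.symm (-1, y)))).1 < -1) ∧
    (∀ y ∈ Set.Icc (-1 : ℝ) 1, 1 < (cN (f (cM.symm (1, y)))).1)) ∨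
   ((∀ y ∈ Set.Icc (-1 : ℝ) 1, (cN (f (cM.symm (1, y)))).1 < -1) ∧
    (∀ y ∈ Set.Icc (-1 : ℝ) 1, 1 < (cN (f (cM.symm (-1, y)))).1))) ∧
  (∀ p ∈ unitSquare, cN (f (cM.symm p)) ∉ Set.Icc (-1 : ℝ) 1 ×ˢ (Set.Ioo (-1 : ℝ) 1)ᶜ)

/-- A horizontal disk in the h-set `(N, c)`: a continuous map `h : [-1,1] → N`
with `π_x (c ∘ h)(s) = s`. -/
def IsHorizontalDisk (N : Set (ℝ × ℝ)) (c : ℝ × ℝ ≃ₜ ℝ × ℝ) (h : ℝ → ℝ × ℝ) : Prop :=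
  ContinuousOn h (Set.Icc (-1 : ℝ) 1) ∧
    ∀ s ∈ Set.Icc (-1 : ℝ) 1, h s ∈ N ∧ (c (h s)).1 = s

/-- The trajectory of `x` under the sequence of maps `f₁, f₂, …`. -/
def traj (f : ℕ → ℝ × ℝ → ℝ × ℝ) (x : ℝ × ℝ) : ℕ → ℝ × ℝ
  | 0 => x
  | n + 1 => f (n + 1) (traj f x n)

theorem isClosed_unitSquare : IsClosed unitSquare :=
  isClosed_Icc.prod isClosed_Icc

theorem openSquare_subset_unitSquare : openSquare ⊆ unitSquare :=
  Set.prod_mono Set.Ioo_subset_Icc_self Set.Ioo_subset_Icc_self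

theorem continuous_traj {f : ℕ → ℝ × ℝ → ℝ × ℝ} (hf : ∀ i, Continuous (f i)) (i : ℕ) :
    Continuous fun x => traj f x i := by
  induction i with
  | zero => exact continuous_id
  | succ i ih => exact (hf (i + 1)).comp ih

theorem IsCompact.exists_forall_mem_of_forall_exists_forall_lt {X : Type*} [TopologicalSpace X]
    {K : Set X} (hK : IsCompact K) {S : ℕ → Set X} (hS : ∀ i, IsClosed (S i))
    (hfin : ∀ k, ∃ x ∈ K, ∀ i < k, x ∈ S i) : ∃ x ∈ K, ∀ i, x ∈ S i := by
  have hfip : ∀ u : Finset ℕ, (K ∩ ⋂ i ∈ u, S i).Nonempty := by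
    intro u
    obtain ⟨k, hk⟩ := u.exists_nat_subset_range
    obtain ⟨x, hxK, hxS⟩ := hfin k
    exact ⟨x, hxK, Set.mem_iInter₂.2 fun i hi => hxS i (Finset.mem_range.1 (hk hi))⟩
  obtain ⟨x, hxK, hxS⟩ := hK.inter_iInter_nonempty S hS hfip
  exact ⟨x, hxK, Set.mem_iInter.1 hxS⟩

namespace Covers

variable {cM cN cP : ℝ × ℝ ≃ₜ ℝ × ℝ} {f g : ℝ × ℝ → ℝ × ℝ} {x : ℝ × ℝ}

theorem snd_mem_Ioo (hf : Covers cM cN f) (hx : cM x ∈ unitSquare)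
    (hfx : cN (f x) ∈ unitSquare) : (cN (f x)).2 ∈ Set.Ioo (-1 : ℝ) 1 := by
  have hentry := hf.2 (cM x) hx
  rw [Homeomorph.symm_apply_apply] at hentry
  by_contra hy
  exact hentry ⟨hfx.1, hy⟩

theorem fst_mem_Ioo (hf : Covers cM cN f) (hx : cM x ∈ unitSquare)
    (hfx : cN (f x) ∈ unitSquare) : (cM x).1 ∈ Set.Ioo (-1 : ℝ) 1 := by
  have hedge : ∀ s, (cM x).1 = s → x = cM.symm (s, (cM x).2) := by
    rintro s rfl
    simp
  have hy : (cM x).2 ∈ Set.Icc (-1 : ℝ) 1 := hx.2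
  have hfx₁ : (cN (f x)).1 ∈ Set.Icc (-1 : ℝ) 1 := hfx.1
  refine ⟨lt_of_le_of_ne hx.1.1 fun hleft => ?_, lt_of_le_of_ne hx.1.2 fun hright => ?_⟩
  · rw [hedge (-1) hleft.symm] at hfx₁
    rcases hf.1 with ⟨hexit, -⟩ | ⟨-, hexit⟩
    · linarith [hexit _ hy, hfx₁.1]
    · linarith [hexit _ hy, hfx₁.2]
  · rw [hedge 1 hright] at hfx₁
    rcases hf.1 with ⟨-, hexit⟩ | ⟨hexit, -⟩
    · linarith [hexit _ hy, hfx₁.2]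
    · linarith [hexit _ hy, hfx₁.1]

theorem mem_openSquare (hf : Covers cM cN f) (hg : Covers cN cP g) (hx : cM x ∈ unitSquare)
    (hfx : cN (f x) ∈ unitSquare) (hgfx : cP (g (f x)) ∈ unitSquare) :
    cN (f x) ∈ openSquare :=
  ⟨hg.fst_mem_Ioo hfx hgfx, hf.snd_mem_Ioo hx hfx⟩

end Covers

/-- given an infinite chain of coverings `N_{i-1} ⟹f_i N_i` and the
finite shadowing property, every horizontal disk `h` in `N₀` contains a point
`z₀` with an infinite forward trajectory `z_i ∈ int N_i` for all `i ≥ 1`. -/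
theorem infinite_forward_shadowing
    (N : ℕ → Set (ℝ × ℝ)) (c : ℕ → ℝ × ℝ ≃ₜ ℝ × ℝ)
    (hN : ∀ i, c i '' N i = unitSquare)
    (f : ℕ → ℝ × ℝ → ℝ × ℝ) (hf : ∀ i, Continuous (f i))
    (hcov : ∀ i : ℕ, Covers (c i) (c (i + 1)) (f (i + 1)))
    (hfin : ∀ (k : ℕ) (h : ℝ → ℝ × ℝ), IsHorizontalDisk (N 0) (c 0) h →
      ∃ x ∈ h '' Set.Icc (-1 : ℝ) 1,
        ∀ i : ℕ, 1 ≤ i → i ≤ k → c i (traj f x i) ∈ openSquare)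
    (h : ℝ → ℝ × ℝ) (hh : IsHorizontalDisk (N 0) (c 0) h) :
    ∃ z : ℕ → ℝ × ℝ, z 0 ∈ h '' Set.Icc (-1 : ℝ) 1 ∧
      ∀ i : ℕ, z (i + 1) = f (i + 1) (z i) ∧ c (i + 1) (z (i + 1)) ∈ openSquare := by
  have hclosed : ∀ i, IsClosed {x | c (i + 1) (traj f x (i + 1)) ∈ unitSquare} := fun i =>
    isClosed_unitSquare.preimage ((c (i + 1)).continuous.comp (continuous_traj hf _))
  have hfin' : ∀ k, ∃ x ∈ h '' Set.Icc (-1 : ℝ) 1,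
      ∀ i < k, c (i + 1) (traj f x (i + 1)) ∈ unitSquare := fun k =>
    (hfin k h hh).imp fun _ ⟨hxh, hx⟩ =>
      ⟨hxh, fun i hi => openSquare_subset_unitSquare (hx (i + 1) i.succ_pos hi)⟩
  obtain ⟨z₀, hz₀, hz₀_mem⟩ := (isCompact_Icc.image_of_continuousOn hh.1)
    |>.exists_forall_mem_of_forall_exists_forall_lt hclosed hfin'
  have hmem : ∀ i, c i (traj f z₀ i) ∈ unitSquare
    | 0 => by
      obtain ⟨s, hs, rfl⟩ := hz₀
      exact hN 0 ▸ Set.mem_image_of_mem _ (hh.2 s hs).1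
    | i + 1 => hz₀_mem i
  exact ⟨traj f z₀, hz₀, fun i =>
    ⟨rfl, (hcov i).mem_openSquare (hcov (i + 1)) (hmem i) (hmem (i + 1)) (hmem (i + 2))⟩⟩
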